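/- Let P be a DPAG and G a directed mixed graph contained in P, and let i ≠ j be two nodes. If i and j are not adjacent in P, or if there is a directed edge i → j in P that is definitely visible in P, then the bidirected edge i ↔ j is absent from G. -/
import Mathlib


namespace CausalGraphs

variable {V : Type*}

/-- A directed mixed graph (DMG): directed edges `dir` (`i → j`) and
bidirected edges `bi` (`i ↔ j`), with no self-loops. -/
structure DMG (V : Type*) where
  dir : V → V → Prop
  bi : V → V → Prop
  dir_irrefl : ∀ i, ¬ dir i i
  bi_irrefl : ∀ i, ¬ bi i i

namespace DMG

/-- `G.Anc i j`: `i ∈ an(G, j)`, i.e. there is a (possibly trivial) directed path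
from `i` to `j` in `G`. -/
def Anc (G : DMG V) (i j : V) : Prop :=
  Relation.ReflTransGen G.dir i j

/-- `G.Scc i j`: `i ∈ scc(G, j)`, i.e. `i` and `j` lie in the same strongly
connected component of `G`. -/
def Scc (G : DMG V) (i j : V) : Prop :=
  G.Anc i j ∧ G.Anc j i

/-- There is a bidirected edge between `i` and `j` (bidirected edges are unordered). -/
def BiEdge (G : DMG V) (i j : V) : Prop :=
  G.bi i j ∨ G.bi j i

/-- `G` has no directed cycle (i.e. `G` is an ADMG). -/
def Acyclic (G : DMG V) : Prop :=
  ∀ i j, G.dir i j → ¬ G.Anc j i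

end DMG

/-- A walk of length `len` is recorded by its vertices `vert 0, …, vert len` and,
for each edge index `k < len`, the edge marks: `intoL k` (resp. `intoR k`) is `true`
iff the `k`-th edge has an arrowhead at `vert k` (resp. at `vert (k+1)`). -/
structure Walk (V : Type*) where
  len : ℕ
  vert : ℕ → V
  intoL : ℕ → Bool
  intoR : ℕ → Bool

namespace Walk

def first (w : Walk V) : V := w.vert 0

def last (w : Walk V) : V := w.vert w.len

/-- The walk is an actual walk in a DMG `G`: each step traverses a directed edge
(in either direction) or a bidirected edge of `G`, with the corresponding marks. -/
def ValidOn (G : DMG V) (w : Walk V) : Prop :=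
  ∀ k, k < w.len →
    (w.intoL k = false ∧ w.intoR k = true ∧ G.dir (w.vert k) (w.vert (k+1))) ∨
    (w.intoL k = true ∧ w.intoR k = false ∧ G.dir (w.vert (k+1)) (w.vert k)) ∨
    (w.intoL k = true ∧ w.intoR k = true ∧ G.BiEdge (w.vert k) (w.vert (k+1)))

/-- `k` is a non-endpoint position of the walk. -/
def Interior (w : Walk V) (k : ℕ) : Prop := 0 < k ∧ k < w.len

/-- The non-endpoint node `vert k` is a collider on the walk: both adjacent
edges have an arrowhead at it. -/
def ColliderAt (w : Walk V) (k : ℕ) : Prop :=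
  w.Interior k ∧ w.intoR (k-1) = true ∧ w.intoL k = true

/-- The non-endpoint node `vert k` is a non-collider on the walk. -/
def NonColliderAt (w : Walk V) (k : ℕ) : Prop :=
  w.Interior k ∧ ¬ (w.intoR (k-1) = true ∧ w.intoL k = true)

/-- The edge on the first-endpoint side of position `k` is directed out of
`vert k`, pointing to the neighbour `vert (k-1)` on the walk. -/
def PointsLeft (w : Walk V) (k : ℕ) : Prop :=
  w.intoL (k-1) = true ∧ w.intoR (k-1) = false

/-- The edge on the last-endpoint side of position `k` is directed out of
`vert k`, pointing to the neighbour `vert (k+1)` on the walk. -/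
def PointsRight (w : Walk V) (k : ℕ) : Prop :=
  w.intoL k = false ∧ w.intoR k = true

/-- The walk is a path: all its vertices are distinct. -/
def IsPath (w : Walk V) : Prop :=
  ∀ a, a ≤ w.len → ∀ b, b ≤ w.len → w.vert a = w.vert b → a = b

/-- The walk is into its first node (arrowhead at the first node). -/
def IntoFirst (w : Walk V) : Prop := 0 < w.len ∧ w.intoL 0 = true

/-- The walk is into its last node (arrowhead at the last node). -/
def IntoLast (w : Walk V) : Prop := 0 < w.len ∧ w.intoR (w.len - 1) = true

/-- The walk is σ-blocked by the set `C`. -/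
def SigmaBlocked (G : DMG V) (w : Walk V) (C : Set V) : Prop :=
  w.first ∈ C ∨ w.last ∈ C ∨
  (∃ k, w.ColliderAt k ∧ ¬ ∃ c ∈ C, G.Anc (w.vert k) c) ∨
  (∃ k, w.NonColliderAt k ∧ w.vert k ∈ C ∧
    ((w.PointsLeft k ∧ ¬ G.Scc (w.vert k) (w.vert (k-1))) ∨
     (w.PointsRight k ∧ ¬ G.Scc (w.vert k) (w.vert (k+1)))))

/-- The walk is d-blocked by the set `C`. -/
def DBlocked (G : DMG V) (w : Walk V) (C : Set V) : Prop :=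
  w.first ∈ C ∨ w.last ∈ C ∨
  (∃ k, w.ColliderAt k ∧ ¬ ∃ c ∈ C, G.Anc (w.vert k) c) ∨
  (∃ k, w.NonColliderAt k ∧ w.vert k ∈ C)

/-- The walk is inducing: every collider on it is an ancestor of one of the two
endpoints, and every non-endpoint non-collider only has outgoing directed edges
to its neighbours on the walk that lie in the same strongly connected component. -/
def Inducing (G : DMG V) (w : Walk V) : Prop :=
  (∀ k, w.ColliderAt k → G.Anc (w.vert k) w.first ∨ G.Anc (w.vert k) w.last) ∧
  (∀ k, w.NonColliderAt k →
    (w.PointsLeft k → G.Scc (w.vert k) (w.vert (k-1))) ∧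
    (w.PointsRight k → G.Scc (w.vert k) (w.vert (k+1))))

end Walk

namespace DMG

/-- `A` and `B` are σ-separated given `C` in `G`. -/
def SigmaSep (G : DMG V) (A B C : Set V) : Prop :=
  ∀ w : Walk V, w.ValidOn G → w.first ∈ A → w.last ∈ B → w.SigmaBlocked G C

/-- `A` and `B` are d-separated given `C` in `G`. -/
def DSep (G : DMG V) (A B C : Set V) : Prop :=
  ∀ w : Walk V, w.ValidOn G → w.first ∈ A → w.last ∈ B → w.DBlocked G C

/-- Nodes `i` and `j` are σ-connected given `C` in `G`. -/
def SigmaConnected (G : DMG V) (i j : V) (C : Set V) : Prop :=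
  ∃ w : Walk V, w.ValidOn G ∧ w.first = i ∧ w.last = j ∧ ¬ w.SigmaBlocked G C

/-- The σ-independence model of `G`. -/
def IMsigma (G : DMG V) : Set (Set V × Set V × Set V) :=
  { t | G.SigmaSep t.1 t.2.1 t.2.2 }

/-- The d-independence model of `G`. -/
def IMd (G : DMG V) : Set (Set V × Set V × Set V) :=
  { t | G.DSep t.1 t.2.1 t.2.2 }

/-- There is an inducing walk between `i` and `j` in `G`. -/
def InducingWalk (G : DMG V) (i j : V) : Prop :=
  ∃ w : Walk V, w.ValidOn G ∧ w.first = i ∧ w.last = j ∧ w.Inducing G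

/-- There is an inducing path between `i` and `j` in `G`. -/
def InducingPath (G : DMG V) (i j : V) : Prop :=
  ∃ w : Walk V, w.ValidOn G ∧ w.first = i ∧ w.last = j ∧ w.IsPath ∧ w.Inducing G

/-- There is an inducing walk between `i` and `j` in `G` that is into `j`. -/
def InducingWalkIntoLast (G : DMG V) (i j : V) : Prop :=
  ∃ w : Walk V, w.ValidOn G ∧ w.first = i ∧ w.last = j ∧ w.Inducing G ∧ w.IntoLast

/-- There is an inducing walk between `i` and `j` in `G` that is into both `i` and `j`. -/
def InducingWalkIntoBoth (G : DMG V) (i j : V) : Prop :=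
  ∃ w : Walk V, w.ValidOn G ∧ w.first = i ∧ w.last = j ∧ w.Inducing G ∧ w.IntoFirst ∧ w.IntoLast

/-- `G'` is an acyclification of `G`. -/
def IsAcyclification (G G' : DMG V) : Prop :=
  G'.Acyclic ∧
  (∀ i j, ¬ G.Scc i j →
    ((G'.dir i j ↔ ∃ k, G.Scc k j ∧ G.dir i k) ∧
     (G'.bi i j ↔ ∃ k, G.Scc k j ∧ G.bi i k))) ∧
  (∀ i j, i ≠ j → G.Scc i j → (G'.dir i j ∨ G'.dir j i ∨ G'.bi i j))

end DMG

/-- Edge marks of a partial ancestral graph. -/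
inductive Mark : Type
  | tail
  | arrow
  | circle
deriving DecidableEq

/-- A directed partial ancestral graph (DPAG). `mark i j` is the edge mark at `j`
on the edge between `i` and `j` (only meaningful when `adj i j`). Allowed edge
types are `→`, `←`, `↔`, `∘→`, `←∘` and `∘—∘`; there are no directed and no
almost directed cycles. -/
structure DPAG (V : Type*) where
  adj : V → V → Prop
  mark : V → V → Mark
  adj_symm : ∀ i j, adj i j → adj j i
  adj_irrefl : ∀ i, ¬ adj i i
  tail_imp_arrow : ∀ i j, adj i j → mark j i = Mark.tail → mark i j = Mark.arrow
  no_directed_cycle : ∀ i, ¬ Relation.TransGen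
    (fun a b => adj a b ∧ mark a b = Mark.arrow ∧ mark b a = Mark.tail) i i
  no_almost_directed_cycle : ∀ i j, Relation.ReflTransGen
    (fun a b => adj a b ∧ mark a b = Mark.arrow ∧ mark b a = Mark.tail) i j →
    ¬ (adj i j ∧ mark i j = Mark.arrow ∧ mark j i = Mark.arrow)

/-- A directed edge `i → j` with respect to raw adjacency/mark data. -/
def DirEdgeOn (adj : V → V → Prop) (mark : V → V → Mark) (i j : V) : Prop :=
  adj i j ∧ mark i j = Mark.arrow ∧ mark j i = Mark.tail

/-- The directed edge `i → j` is definitely visible, with respect to raw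
adjacency/mark data: there is a node `k` not adjacent to `j` such that either
the edge between `k` and `i` is into `i`, or there is a path between `k` and `i`
that is into `i` on which every non-endpoint node is a collider and a parent of `j`. -/
def DefinitelyVisibleOn (adj : V → V → Prop) (mark : V → V → Mark) (i j : V) : Prop :=
  DirEdgeOn adj mark i j ∧
  ∃ k, ¬ adj k j ∧
    ((adj k i ∧ mark k i = Mark.arrow) ∨
     (∃ n, ∃ p : ℕ → V, 0 < n ∧ p 0 = k ∧ p n = i ∧
       (∀ a, a ≤ n → ∀ b, b ≤ n → p a = p b → a = b) ∧
       (∀ m, m < n → adj (p m) (p (m+1))) ∧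
       mark (p (n-1)) i = Mark.arrow ∧
       (∀ m, 0 < m → m < n →
         (mark (p (m-1)) (p m) = Mark.arrow ∧ mark (p (m+1)) (p m) = Mark.arrow) ∧
         DirEdgeOn adj mark (p m) j)))

namespace DPAG

/-- `i → j` in `P`. -/
def DirEdge (P : DPAG V) (i j : V) : Prop := DirEdgeOn P.adj P.mark i j

/-- `i ↔ j` in `P`. -/
def BiEdge (P : DPAG V) (i j : V) : Prop :=
  P.adj i j ∧ P.mark i j = Mark.arrow ∧ P.mark j i = Mark.arrow

/-- `i *→ j` in `P`: an edge between `i` and `j` with an arrowhead at `j`. -/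
def ArrowAt (P : DPAG V) (i j : V) : Prop := P.adj i j ∧ P.mark i j = Mark.arrow

/-- The directed edge `i → j` of `P` is definitely visible in `P`. -/
def DefinitelyVisible (P : DPAG V) (i j : V) : Prop :=
  DefinitelyVisibleOn P.adj P.mark i j

/-- The DPAG `P` contains the DMG `G`. -/
def Contains (P : DPAG V) (G : DMG V) : Prop :=
  (∀ i j, i ≠ j → (P.adj i j ↔ G.InducingPath i j)) ∧
  (∀ i j, P.ArrowAt i j → ¬ G.Anc j i) ∧
  (∀ i j, P.DirEdge i j → G.Anc i j)

/-- `p 0, …, p n` is a possibly directed path in `P`: consecutive vertices are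
adjacent, no edge has an arrowhead at the endpoint nearer `p 0`, and all
vertices are distinct. -/
def PossiblyDirectedPathOn (P : DPAG V) (n : ℕ) (p : ℕ → V) : Prop :=
  (∀ k, k < n → P.adj (p k) (p (k+1)) ∧ P.mark (p (k+1)) (p k) ≠ Mark.arrow) ∧
  (∀ a, a ≤ n → ∀ b, b ≤ n → p a = p b → a = b)

/-- The path `p 0, …, p n` is uncovered: every consecutive triple is unshielded. -/
def UncoveredOn (P : DPAG V) (n : ℕ) (p : ℕ → V) : Prop :=
  ∀ k, k + 2 ≤ n → ¬ P.adj (p k) (p (k+2))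

/-- There is a possibly directed path from `i` to `j` in `P`. -/
def PDPath (P : DPAG V) (i j : V) : Prop :=
  ∃ n, ∃ p : ℕ → V, p 0 = i ∧ p n = j ∧ P.PossiblyDirectedPathOn n p

end DPAG

/-- JCI Assumption 1 (exogeneity): no system variable causes any context variable
(`K` is the set of context nodes; its complement is the set of system nodes). -/
def JCI1 (G : DMG V) (K : Set V) : Prop :=
  ∀ i k, i ∉ K → k ∈ K → ¬ G.dir i k

/-- JCI Assumption 2 (randomization): no pair of a system and a context variable
is confounded. -/
def JCI2 (G : DMG V) (K : Set V) : Prop :=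
  ∀ i k, i ∉ K → k ∈ K → ¬ G.BiEdge i k

/-- JCI Assumption 3 (genericity): every pair of distinct context variables is
connected by a bidirected edge and by no directed edge. -/
def JCI3 (G : DMG V) (K : Set V) : Prop :=
  ∀ k k', k ∈ K → k' ∈ K → k ≠ k' → (G.bi k k' ∧ ¬ G.dir k k')

/-- An independence model on `V`: a set of triples of subsets of `V`. -/
abbrev IndepModel (V : Type*) := Set (Set V × Set V × Set V)

/-- Background knowledge `Ψ` is compatible with the acyclification. -/
def CompatibleWithAcyclification (Ψ : DMG V → Prop) : Prop :=
  ∀ G : DMG V, Ψ G →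
    (∃ G', G.IsAcyclification G' ∧ Ψ G') ∧
    (∀ i j : V, G.Anc i j → ∃ G', G.IsAcyclification G' ∧ Ψ G' ∧ G'.Anc i j) ∧
    (∀ i j : V, ¬ G.Anc i j → ∀ G', G.IsAcyclification G' → Ψ G' → ¬ G'.Anc i j)

section Statement10Aux

variable {G : DMG V} {w : Walk V}

lemma anc_trans {a b c : V} (h1 : G.Anc a b) (h2 : G.Anc b c) : G.Anc a c :=
  Relation.ReflTransGen.trans h1 h2

lemma dir_anc {a b : V} (h : G.dir a b) : G.Anc a b :=
  Relation.ReflTransGen.single h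

lemma dir_of_intoL_false (hv : w.ValidOn G) {q : ℕ} (hq : q < w.len)
    (h : w.intoL q = false) :
    G.dir (w.vert q) (w.vert (q+1)) ∧ w.intoR q = true := by
  rcases hv q hq with ⟨h1, h2, h3⟩ | ⟨h1, h2, h3⟩ | ⟨h1, h2, h3⟩ <;> simp_all

lemma dir_of_intoR_false (hv : w.ValidOn G) {q : ℕ} (hq : q < w.len)
    (h : w.intoR q = false) :
    G.dir (w.vert (q+1)) (w.vert q) ∧ w.intoL q = true := by
  rcases hv q hq with ⟨h1, h2, h3⟩ | ⟨h1, h2, h3⟩ | ⟨h1, h2, h3⟩ <;> simp_all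

/-- Rightward chase: a vertex whose right edge is directed out of it is an
ancestor of one of the endpoints. -/
lemma chaseRight (hv : w.ValidOn G) (hi : w.Inducing G) :
    ∀ t q, q < w.len → w.len ≤ q + t → w.intoL q = false →
      G.Anc (w.vert q) w.first ∨ G.Anc (w.vert q) w.last := by
  intro t
  induction t with
  | zero => intro q hq hle _; omega
  | succ t ih =>
    intro q hq hle hL
    obtain ⟨hdir, hR⟩ := dir_of_intoL_false hv hq hL
    rcases eq_or_lt_of_le (Nat.succ_le_of_lt hq) with he | hlt
    · right
      have : w.last = w.vert (q+1) := by rw [Walk.last, ← he]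
      rw [this]; exact dir_anc hdir
    · by_cases hL1 : w.intoL (q+1) = true
      · have hcol : w.ColliderAt (q+1) := by
          refine ⟨⟨by omega, hlt⟩, ?_, hL1⟩
          simpa using hR
        rcases hi.1 _ hcol with h' | h'
        · exact Or.inl (anc_trans (dir_anc hdir) h')
        · exact Or.inr (anc_trans (dir_anc hdir) h')
      · rcases ih (q+1) hlt (by omega) (by simpa using hL1) with h' | h'
        · exact Or.inl (anc_trans (dir_anc hdir) h')
        · exact Or.inr (anc_trans (dir_anc hdir) h')

/-- Leftward chase from the last endpoint. -/
lemma chaseLeft (hv : w.ValidOn G) (hi : w.Inducing G) :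
    ∀ p, 0 < p → p ≤ w.len → w.intoR (p-1) = false → G.Anc w.last (w.vert p) →
      G.Anc w.last w.first ∨ G.Anc (w.vert (p-1)) w.last := by
  intro p
  induction p with
  | zero => intro h; omega
  | succ m ih =>
    intro _ hle hR hAnc
    have hm : m < w.len := by omega
    have h1 : (m + 1) - 1 = m := by omega
    rw [h1] at hR ⊢
    obtain ⟨hdir, hL⟩ := dir_of_intoR_false hv hm hR
    have hAnc' : G.Anc w.last (w.vert m) := anc_trans hAnc (dir_anc hdir)
    rcases Nat.eq_zero_or_pos m with rfl | hm0
    · exact Or.inl hAnc'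
    · by_cases hR2 : w.intoR (m-1) = true
      · have hcol : w.ColliderAt m := ⟨⟨hm0, hm⟩, hR2, hL⟩
        rcases hi.1 _ hcol with h' | h'
        · exact Or.inl (anc_trans hAnc' h')
        · exact Or.inr h'
      · rcases ih hm0 (by omega) (by simpa using hR2) hAnc' with h' | h'
        · exact Or.inl h'
        · right
          have hm1 : m - 1 < w.len := by omega
          obtain ⟨hdir2, _⟩ := dir_of_intoR_false hv hm1 (by simpa using hR2)
          have h2 : (m - 1) + 1 = m := by omega
          rw [h2] at hdir2
          exact anc_trans (dir_anc hdir2) h'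

lemma chaseLeftCor (hv : w.ValidOn G) (hi : w.Inducing G) (h0 : 0 < w.len)
    (hR : w.intoR (w.len - 1) = false) (hna : ¬ G.Anc w.last w.first) :
    G.Scc w.last (w.vert (w.len - 1)) := by
  rcases chaseLeft hv hi w.len h0 le_rfl hR Relation.ReflTransGen.refl with h' | h'
  · exact absurd h' hna
  · have hm1 : w.len - 1 < w.len := by omega
    obtain ⟨hdir, _⟩ := dir_of_intoR_false hv hm1 hR
    have h2 : (w.len - 1) + 1 = w.len := by omega
    rw [h2] at hdir
    exact ⟨dir_anc hdir, h'⟩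

/-- Rightward chase from the first endpoint. -/
lemma chaseRight' (hv : w.ValidOn G) (hi : w.Inducing G) :
    ∀ t p, p < w.len → w.len ≤ p + t → w.intoL p = false → G.Anc w.first (w.vert p) →
      G.Anc w.first w.last ∨ G.Anc (w.vert (p+1)) w.first := by
  intro t
  induction t with
  | zero => intro p hp hle _ _; omega
  | succ t ih =>
    intro p hp hle hL hAnc
    obtain ⟨hdir, hR⟩ := dir_of_intoL_false hv hp hL
    have hAnc' : G.Anc w.first (w.vert (p+1)) := anc_trans hAnc (dir_anc hdir)
    rcases eq_or_lt_of_le (Nat.succ_le_of_lt hp) with he | hlt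
    · left
      have : w.last = w.vert (p+1) := by rw [Walk.last, ← he]
      rw [this]; exact hAnc'
    · by_cases hL1 : w.intoL (p+1) = true
      · have hcol : w.ColliderAt (p+1) := by
          refine ⟨⟨by omega, hlt⟩, ?_, hL1⟩
          simpa using hR
        rcases hi.1 _ hcol with h' | h'
        · exact Or.inr h'
        · exact Or.inl (anc_trans hAnc' h')
      · rcases ih (p+1) hlt (by omega) (by simpa using hL1) hAnc' with h' | h'
        · exact Or.inl h'
        · right
          obtain ⟨hdir2, _⟩ := dir_of_intoL_false hv hlt (by simpa using hL1)
          exact anc_trans (dir_anc hdir2) h'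

lemma chaseRightCor (hv : w.ValidOn G) (hi : w.Inducing G) (h0 : 0 < w.len)
    (hL : w.intoL 0 = false) (hna : ¬ G.Anc w.first w.last) :
    G.Scc w.first (w.vert 1) := by
  rcases chaseRight' hv hi w.len 0 h0 (by omega) hL Relation.ReflTransGen.refl with h' | h'
  · exact absurd h' hna
  · obtain ⟨hdir, _⟩ := dir_of_intoL_false hv h0 hL
    exact ⟨dir_anc hdir, h'⟩

/-- Concatenation of two walks. -/
def Walk.append (u v : Walk V) : Walk V :=
  ⟨u.len + v.len,
   fun q => if q < u.len then u.vert q else v.vert (q - u.len),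
   fun q => if q < u.len then u.intoL q else v.intoL (q - u.len),
   fun q => if q < u.len then u.intoR q else v.intoR (q - u.len)⟩

section Append

variable {G : DMG V} {u v : Walk V}

lemma append_vert_le (q : ℕ) (hlink : u.last = v.first) (hq : q ≤ u.len) :
    (u.append v).vert q = u.vert q := by
  rcases lt_or_eq_of_le hq with h | rfl
  · simp [Walk.append, h]
  · simp only [Walk.append, lt_irrefl, if_neg (lt_irrefl _), Nat.sub_self]
    rw [show v.vert 0 = v.first from rfl, ← hlink]; rfl

lemma append_vert_ge (q : ℕ) (hq : u.len ≤ q) :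
    (u.append v).vert q = v.vert (q - u.len) := by
  simp only [Walk.append]
  rw [if_neg (by omega)]

lemma append_intoL_lt (q : ℕ) (hq : q < u.len) : (u.append v).intoL q = u.intoL q := by
  simp [Walk.append, hq]

lemma append_intoR_lt (q : ℕ) (hq : q < u.len) : (u.append v).intoR q = u.intoR q := by
  simp [Walk.append, hq]

lemma append_intoL_ge (q : ℕ) (hq : u.len ≤ q) :
    (u.append v).intoL q = v.intoL (q - u.len) := by
  simp only [Walk.append]; rw [if_neg (by omega)]

lemma append_intoR_ge (q : ℕ) (hq : u.len ≤ q) :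
    (u.append v).intoR q = v.intoR (q - u.len) := by
  simp only [Walk.append]; rw [if_neg (by omega)]

lemma append_first (hlink : u.last = v.first) : (u.append v).first = u.first :=
  append_vert_le 0 hlink (by omega)

lemma append_last : (u.append v).last = v.last := by
  rw [Walk.last, Walk.last]
  show (u.append v).vert (u.len + v.len) = v.vert v.len
  rw [append_vert_ge _ (by omega)]
  congr 1; omega

lemma append_valid (hu : u.ValidOn G) (hv : v.ValidOn G) (hlink : u.last = v.first) :
    (u.append v).ValidOn G := by
  intro q hq
  have hq' : q < u.len + v.len := hq
  rcases lt_or_ge q u.len with h | h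
  · rw [append_intoL_lt q h, append_intoR_lt q h, append_vert_le q hlink (by omega),
      append_vert_le (q+1) hlink (by omega)]
    exact hu q h
  · have h1 : q - u.len < v.len := by omega
    rw [append_intoL_ge q h, append_intoR_ge q h, append_vert_ge q h,
      append_vert_ge (q+1) (by omega), show q + 1 - u.len = (q - u.len) + 1 by omega]
    exact hv _ h1

lemma append_inducing (hu : u.ValidOn G) (hvv : v.ValidOn G) (hlink : u.last = v.first)
    (hui : u.Inducing G) (hvi : v.Inducing G) (hx : G.Anc u.last v.last)
    (jcL : 0 < u.len → u.intoR (u.len - 1) = false → G.Scc u.last (u.vert (u.len - 1)))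
    (jcR : 0 < v.len → v.intoL 0 = false → G.Scc v.first (v.vert 1)) :
    (u.append v).Inducing G := by
  have hfirst := append_first (v := v) hlink
  have hlast := append_last (u := u) (v := v)
  constructor
  · -- colliders
    rintro k ⟨⟨hk0, hklen⟩, hR, hL⟩
    have hklen' : k < u.len + v.len := hklen
    rcases lt_trichotomy k u.len with h | h | h
    · -- inside u
      rw [append_intoR_lt _ (by omega)] at hR
      rw [append_intoL_lt _ h] at hL
      have : u.ColliderAt k := ⟨⟨hk0, h⟩, hR, hL⟩
      rcases hui.1 _ this with h' | h'
      · left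
        rw [append_vert_le _ hlink (by omega), hfirst]; exact h'
      · right
        rw [append_vert_le _ hlink (by omega), hlast]
        exact anc_trans h' hx
    · right
      rw [hlast, h, append_vert_ge _ le_rfl, Nat.sub_self,
        show v.vert 0 = v.first from rfl, ← hlink]
      exact hx
    · -- inside v
      rw [append_intoR_ge _ (by omega), show k - 1 - u.len = (k - u.len) - 1 by omega] at hR
      rw [append_intoL_ge _ (by omega)] at hL
      have : v.ColliderAt (k - u.len) := ⟨⟨by omega, by omega⟩, hR, hL⟩
      rcases hvi.1 _ this with h' | h'
      · right
        rw [append_vert_ge _ (by omega), hlast]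
        rw [show v.first = u.last from hlink.symm] at h'
        exact anc_trans h' hx
      · right
        rw [append_vert_ge _ (by omega), hlast]; exact h'
  · -- non-colliders
    rintro k ⟨⟨hk0, hklen⟩, hnc⟩
    have hklen' : k < u.len + v.len := hklen
    rcases lt_trichotomy k u.len with h | h | h
    · -- inside u
      have e1 : (u.append v).intoR (k-1) = u.intoR (k-1) := append_intoR_lt _ (by omega)
      have e2 : (u.append v).intoL k = u.intoL k := append_intoL_lt _ h
      have e3 : (u.append v).intoL (k-1) = u.intoL (k-1) := append_intoL_lt _ (by omega)
      have e4 : (u.append v).intoR k = u.intoR k := append_intoR_lt _ h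
      rw [e1, e2] at hnc
      have hn : u.NonColliderAt k := ⟨⟨hk0, h⟩, hnc⟩
      obtain ⟨hPL, hPR⟩ := hui.2 _ hn
      constructor
      · rintro ⟨p1, p2⟩
        rw [e3] at p1; rw [e1] at p2
        rw [append_vert_le _ hlink (by omega), append_vert_le _ hlink (by omega)]
        exact hPL ⟨p1, p2⟩
      · rintro ⟨p1, p2⟩
        rw [e2] at p1; rw [e4] at p2
        rw [append_vert_le _ hlink (by omega), append_vert_le _ hlink (by omega)]
        exact hPR ⟨p1, p2⟩
    · -- junction
      subst h
      have e1 : (u.append v).intoR (u.len - 1) = u.intoR (u.len - 1) :=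
        append_intoR_lt _ (by omega)
      have e3 : (u.append v).intoL (u.len - 1) = u.intoL (u.len - 1) :=
        append_intoL_lt _ (by omega)
      have e2 : (u.append v).intoL u.len = v.intoL 0 := by
        rw [append_intoL_ge _ le_rfl, Nat.sub_self]
      have e4 : (u.append v).intoR u.len = v.intoR 0 := by
        rw [append_intoR_ge _ le_rfl, Nat.sub_self]
      have ev : (u.append v).vert u.len = u.last := append_vert_le _ hlink le_rfl
      constructor
      · rintro ⟨p1, p2⟩
        rw [e1] at p2
        rw [ev, append_vert_le _ hlink (by omega)]
        exact jcL (by omega) p2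
      · rintro ⟨p1, p2⟩
        rw [e2] at p1; rw [e4] at p2
        have hvlen : 0 < v.len := by omega
        have := jcR hvlen p1
        rw [ev, append_vert_ge _ (by omega), show u.len + 1 - u.len = 1 by omega,
          show u.last = v.first from hlink]
        exact this
    · -- inside v
      have e1 : (u.append v).intoR (k-1) = v.intoR ((k - u.len) - 1) := by
        rw [append_intoR_ge _ (by omega)]; congr 1; omega
      have e2 : (u.append v).intoL k = v.intoL (k - u.len) := append_intoL_ge _ (by omega)
      have e3 : (u.append v).intoL (k-1) = v.intoL ((k - u.len) - 1) := by
        rw [append_intoL_ge _ (by omega)]; congr 1; omega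
      have e4 : (u.append v).intoR k = v.intoR (k - u.len) := append_intoR_ge _ (by omega)
      rw [e1, e2] at hnc
      have hn : v.NonColliderAt (k - u.len) := ⟨⟨by omega, by omega⟩, hnc⟩
      obtain ⟨hPL, hPR⟩ := hvi.2 _ hn
      constructor
      · rintro ⟨p1, p2⟩
        rw [e3] at p1; rw [e1] at p2
        rw [append_vert_ge _ (by omega), append_vert_ge _ (by omega),
          show k - 1 - u.len = (k - u.len) - 1 by omega]
        exact hPL ⟨p1, p2⟩
      · rintro ⟨p1, p2⟩
        rw [e2] at p1; rw [e4] at p2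
        rw [append_vert_ge _ (by omega), append_vert_ge _ (by omega),
          show k + 1 - u.len = (k - u.len) + 1 by omega]
        exact hPR ⟨p1, p2⟩

end Append

section Splice

variable {G : DMG V}

/-- Every inducing walk between distinct nodes contains an inducing path. -/
lemma inducingWalk_toPath :
    ∀ N (w : Walk V), w.len ≤ N → w.ValidOn G → w.Inducing G → w.first ≠ w.last →
      G.InducingPath w.first w.last := by
  intro N
  induction N with
  | zero =>
    intro w hlen _ _ hne
    exact absurd (by rw [Walk.first, Walk.last, Nat.eq_zero_of_le_zero hlen]) hne
  | succ N ih =>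
    intro w hlen hv hi hne
    by_cases hp : w.IsPath
    · exact ⟨w, hv, rfl, rfl, hp, hi⟩
    unfold Walk.IsPath at hp
    push_neg at hp
    obtain ⟨a', ha', b', hb', heq', hne'⟩ := hp
    -- wlog a < b
    obtain ⟨a, b, ha, hb, heq, hab⟩ :
        ∃ a b, a ≤ w.len ∧ b ≤ w.len ∧ w.vert a = w.vert b ∧ a < b := by
      rcases lt_or_gt_of_ne hne' with h | h
      · exact ⟨a', b', ha', hb', heq', h⟩
      · exact ⟨b', a', hb', ha', heq'.symm, h⟩
    set d := b - a with hd
    set w' : Walk V :=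
      ⟨w.len - d,
       fun q => if q ≤ a then w.vert q else w.vert (q + d),
       fun q => if q < a then w.intoL q else w.intoL (q + d),
       fun q => if q < a then w.intoR q else w.intoR (q + d)⟩ with hw'
    have hvge : ∀ q, a ≤ q → w'.vert q = w.vert (q + d) := by
      intro q hq
      rcases eq_or_lt_of_le hq with heq2 | h
      · subst heq2
        have : w.vert a = w.vert (a + d) := by
          rw [show a + d = b by omega]; exact heq
        simpa [hw'] using this
      · simp only [hw']
        rw [if_neg (by omega)]
    have hvle : ∀ q, q ≤ a → w'.vert q = w.vert q := by
      intro q hq; simp [hw', hq]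
    have hLlt : ∀ q, q < a → w'.intoL q = w.intoL q := by intro q hq; simp [hw', hq]
    have hRlt : ∀ q, q < a → w'.intoR q = w.intoR q := by intro q hq; simp [hw', hq]
    have hLge : ∀ q, a ≤ q → w'.intoL q = w.intoL (q + d) := by
      intro q hq; simp only [hw']; rw [if_neg (by omega)]
    have hRge : ∀ q, a ≤ q → w'.intoR q = w.intoR (q + d) := by
      intro q hq; simp only [hw']; rw [if_neg (by omega)]
    have hlen' : w'.len = w.len - d := rfl
    have hfirst' : w'.first = w.first := hvle 0 (by omega)
    have hlast' : w'.last = w.last := by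
      rw [Walk.last, Walk.last, hlen']
      rcases le_or_gt (w.len - d) a with h | h
      · have hba : w.len = b := by omega
        rw [hvle _ h, show w.len - d = a by omega, heq, ← hba]
      · rw [hvge _ (by omega), show w.len - d + d = w.len by omega]
    have hv' : w'.ValidOn G := by
      intro q hq
      rw [hlen'] at hq
      rcases lt_or_ge q a with h | h
      · rw [hLlt q h, hRlt q h, hvle q (by omega), hvle (q+1) (by omega)]
        exact hv q (by omega)
      · rw [hLge q h, hRge q h, hvge q h, hvge (q+1) (by omega),
          show q + 1 + d = (q + d) + 1 by omega]
        exact hv (q + d) (by omega)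
    have hi' : w'.Inducing G := by
      constructor
      · rintro k ⟨⟨hk0, hklen⟩, hR, hL⟩
        rw [hlen'] at hklen
        rcases lt_trichotomy k a with h | h | h
        · rw [hRlt _ (by omega)] at hR
          rw [hLlt _ h] at hL
          have : w.ColliderAt k := ⟨⟨hk0, by omega⟩, hR, hL⟩
          rw [hvle _ (by omega), hfirst', hlast']
          exact hi.1 _ this
        · subst h
          rw [hRlt _ (by omega)] at hR
          rw [hLge _ le_rfl] at hL
          rw [hvle _ le_rfl, hfirst', hlast']
          by_cases hLa : w.intoL k = true
          · exact hi.1 _ ⟨⟨hk0, by omega⟩, hR, hLa⟩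
          · exact chaseRight hv hi w.len k (by omega) (by omega)
              (by simpa using hLa)
        · rw [hRge _ (by omega), show k - 1 + d = (k + d) - 1 by omega] at hR
          rw [hLge _ (by omega)] at hL
          have : w.ColliderAt (k + d) := ⟨⟨by omega, by omega⟩, hR, hL⟩
          rw [hvge _ (by omega), hfirst', hlast']
          exact hi.1 _ this
      · rintro k ⟨⟨hk0, hklen⟩, hnc⟩
        rw [hlen'] at hklen
        rcases lt_trichotomy k a with h | h | h
        · have e1 := hRlt (k-1) (by omega)
          have e2 := hLlt k h
          have e3 := hLlt (k-1) (by omega)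
          have e4 := hRlt k h
          rw [e1, e2] at hnc
          obtain ⟨hPL, hPR⟩ := hi.2 _ ⟨⟨hk0, by omega⟩, hnc⟩
          constructor
          · rintro ⟨p1, p2⟩
            rw [e3] at p1; rw [e1] at p2
            rw [hvle _ (by omega), hvle _ (by omega)]
            exact hPL ⟨p1, p2⟩
          · rintro ⟨p1, p2⟩
            rw [e2] at p1; rw [e4] at p2
            rw [hvle _ (by omega), hvle _ (by omega)]
            exact hPR ⟨p1, p2⟩
        · subst h
          have e1 := hRlt (k-1) (by omega)
          have e3 := hLlt (k-1) (by omega)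
          have e2 := hLge k le_rfl
          have e4 := hRge k le_rfl
          constructor
          · rintro ⟨p1, p2⟩
            rw [e3] at p1; rw [e1] at p2
            have hn : w.NonColliderAt k := by
              refine ⟨⟨hk0, by omega⟩, ?_⟩
              rintro ⟨q1, q2⟩; rw [q1] at p2; exact absurd p2 (by simp)
            rw [hvle _ le_rfl, hvle _ (by omega)]
            exact (hi.2 _ hn).1 ⟨p1, p2⟩
          · rintro ⟨p1, p2⟩
            rw [e2] at p1; rw [e4] at p2
            have hn : w.NonColliderAt (k + d) := by
              refine ⟨⟨by omega, by omega⟩, ?_⟩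
              rintro ⟨q1, q2⟩; rw [q2] at p1; exact absurd p1 (by simp)
            have := (hi.2 _ hn).2 ⟨p1, p2⟩
            rw [hvle _ le_rfl, hvge _ (by omega), show k + 1 + d = (k + d) + 1 by omega]
            rw [show w.vert k = w.vert (k + d) by rw [show k + d = b by omega]; exact heq]
            exact this
        · have e1 : w'.intoR (k-1) = w.intoR ((k+d)-1) := by
            rw [hRge _ (by omega)]; congr 1; omega
          have e3 : w'.intoL (k-1) = w.intoL ((k+d)-1) := by
            rw [hLge _ (by omega)]; congr 1; omega
          have e2 := hLge k (by omega)
          have e4 := hRge k (by omega)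
          rw [e1, e2] at hnc
          obtain ⟨hPL, hPR⟩ := hi.2 _ ⟨⟨by omega, by omega⟩, hnc⟩
          constructor
          · rintro ⟨p1, p2⟩
            rw [e3] at p1; rw [e1] at p2
            rw [hvge _ (by omega), hvge _ (by omega),
              show k - 1 + d = (k + d) - 1 by omega]
            exact hPL ⟨p1, p2⟩
          · rintro ⟨p1, p2⟩
            rw [e2] at p1; rw [e4] at p2
            rw [hvge _ (by omega), hvge _ (by omega),
              show k + 1 + d = (k + d) + 1 by omega]
            exact hPR ⟨p1, p2⟩
    have := ih w' (by rw [hlen']; omega) hv' hi' (by rw [hfirst', hlast']; exact hne)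
    rw [hfirst', hlast'] at this
    exact this

end Splice

lemma biEdge_walk {G : DMG V} {a b : V} (h : G.BiEdge a b) :
    ∃ w : Walk V, w.ValidOn G ∧ w.Inducing G ∧ w.first = a ∧ w.last = b ∧
      w.len = 1 ∧ w.intoL 0 = true ∧ (a ≠ b → w.IsPath) := by
  refine ⟨⟨1, fun q => if q = 0 then a else b, fun _ => true, fun _ => true⟩,
    ?_, ⟨?_, ?_⟩, by simp [Walk.first], by simp [Walk.last], rfl, rfl, ?_⟩
  · intro q hq
    have hq' : q < 1 := hq
    have : q = 0 := by omega
    subst this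
    exact Or.inr (Or.inr ⟨rfl, rfl, by simpa using h⟩)
  · rintro k ⟨⟨hk0, hk1⟩, -, -⟩
    have hk1' : k < 1 := hk1
    exact absurd rfl (by omega : ¬ (0:ℕ) = 0)
  · rintro k ⟨⟨hk0, hk1⟩, -⟩
    have hk1' : k < 1 := hk1
    exact absurd rfl (by omega : ¬ (0:ℕ) = 0)
  · intro hne a' ha' b' hb' heq
    interval_cases a' <;> interval_cases b' <;> simp_all

end Statement10Aux

/-- if `i` and `j` are not adjacent in `P`, or the directed edge
`i → j` of `P` is definitely visible in `P`, then the bidirected edge `i ↔ j` is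
absent from any DMG `G` contained in `P`. -/
theorem statement10 (P : DPAG V) (G : DMG V) (hPG : P.Contains G)
    (i j : V) (hij : i ≠ j)
    (h : ¬ P.adj i j ∨ P.DefinitelyVisible i j) :
    ¬ G.BiEdge i j := by
  intro hbi
  obtain ⟨hadj_iff, harrow, hdirC⟩ := hPG
  obtain ⟨w0, hw0v, hw0i, hw0f, hw0l, hw0len, hw0L, hw0p⟩ := biEdge_walk hbi
  have hadjij : P.adj i j :=
    (hadj_iff i j hij).2 ⟨w0, hw0v, hw0f, hw0l, hw0p hij, hw0i⟩
  rcases h with hna | hvis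
  · exact hna hadjij
  obtain ⟨hde, k, hkj, hcase⟩ := hvis
  have hAncij : G.Anc i j := hdirC i j hde
  obtain ⟨hadj_ij, hm_ij, hm_ji⟩ := hde
  obtain ⟨n, p, hn0, hp0, hpn, hinj, hadjp, hmlast, hint⟩ :
      ∃ n, ∃ p : ℕ → V, 0 < n ∧ p 0 = k ∧ p n = i ∧
        (∀ a, a ≤ n → ∀ b, b ≤ n → p a = p b → a = b) ∧
        (∀ m, m < n → P.adj (p m) (p (m+1))) ∧
        P.mark (p (n-1)) i = Mark.arrow ∧
        (∀ m, 0 < m → m < n →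
          (P.mark (p (m-1)) (p m) = Mark.arrow ∧ P.mark (p (m+1)) (p m) = Mark.arrow) ∧
          DirEdgeOn P.adj P.mark (p m) j) := by
    rcases hcase with ⟨hka, hkm⟩ | ⟨n, p, h1, h2, h3, h4, h5, h6, h7⟩
    · have hki : k ≠ i := fun hh => P.adj_irrefl i (hh ▸ hka)
      refine ⟨1, fun q => if q = 0 then k else i, one_pos, by simp, by simp, ?_, ?_, by simpa using hkm, by omega⟩
      · intro a ha b hb hpe
        interval_cases a <;> interval_cases b <;> simp_all
      · intro m hm
        have : m = 0 := by omega
        subst this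
        simpa using hka
    · exact ⟨n, p, h1, h2, h3, h4, h5, h6, h7⟩
  have hkjne : k ≠ j := by
    intro hkj'
    subst hkj'
    rcases Nat.lt_or_ge 1 n with h2 | h2
    · obtain ⟨⟨hma, -⟩, hdej⟩ := hint 1 one_pos h2
      rw [show (1:ℕ) - 1 = 0 from rfl, hp0, hdej.2.2] at hma
      exact absurd hma (by simp)
    · have hn1 : n = 1 := by omega
      rw [hn1, show (1:ℕ) - 1 = 0 from rfl, hp0, hm_ji] at hmlast
      exact absurd hmlast (by simp)
  have hAncJ : ∀ m, 0 < m → m ≤ n → G.Anc (p m) j := by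
    intro m hm0 hmn
    rcases eq_or_lt_of_le hmn with heq | hlt
    · rw [heq, hpn]; exact hAncij
    · exact hdirC _ _ ((hint m hm0 hlt).2)
  have hArrowR : ∀ m, 0 < m → m ≤ n → P.mark (p (m-1)) (p m) = Mark.arrow := by
    intro m hm0 hmn
    rcases eq_or_lt_of_le hmn with heq | hlt
    · rw [heq, hpn]; exact hmlast
    · exact (hint m hm0 hlt).1.1
  have hnotAncR : ∀ m, 0 < m → m ≤ n → ¬ G.Anc (p m) (p (m-1)) := by
    intro m hm0 hmn
    apply harrow
    refine ⟨?_, hArrowR m hm0 hmn⟩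
    have := hadjp (m-1) (by omega)
    rwa [show m - 1 + 1 = m by omega] at this
  have hnotAncL : ∀ m, 0 < m → m < n → ¬ G.Anc (p m) (p (m+1)) := by
    intro m hm0 hmn
    exact harrow _ _ ⟨P.adj_symm _ _ (hadjp m hmn), (hint m hm0 hmn).1.2⟩
  have key : ∀ t, t ≤ n → ∃ W : Walk V, W.ValidOn G ∧ W.Inducing G ∧
      W.first = p (n - t) ∧ W.last = j ∧ 0 < W.len ∧
      (0 < n - t → W.intoL 0 = false → G.Scc W.first (W.vert 1)) := by
    intro t
    induction t with
    | zero =>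
      intro _
      refine ⟨w0, hw0v, hw0i, ?_, hw0l, by omega, ?_⟩
      · rw [hw0f, Nat.sub_zero, hpn]
      · intro _ hL
        rw [hw0L] at hL
        exact absurd hL (by simp)
    | succ t ih =>
      intro hts
      obtain ⟨W, hWv, hWi, hWf, hWl, hWlen, hWinv⟩ := ih (by omega)
      have hm1 : n - t = (n - (t+1)) + 1 := by omega
      set m := n - (t+1) with hmdef
      rw [hm1] at hWf
      have hne : p m ≠ p (m+1) := by
        intro hpe
        have := hinj m (by omega) (m+1) (by omega) hpe
        omega
      obtain ⟨u, huv, huf, hul, hup, hui⟩ := (hadj_iff _ _ hne).1 (hadjp m (by omega))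
      have hulen : 0 < u.len := by
        rcases Nat.eq_zero_or_pos u.len with h0 | h0
        · exfalso
          apply hne
          rw [← huf, ← hul]
          show u.vert 0 = u.vert u.len
          rw [h0]
        · exact h0
      have hlink : u.last = W.first := by rw [hul, hWf]
      have hx : G.Anc u.last W.last := by
        rw [hul, hWl]; exact hAncJ (m+1) (by omega) (by omega)
      have jcL : 0 < u.len → u.intoR (u.len - 1) = false →
          G.Scc u.last (u.vert (u.len - 1)) := by
        intro _ hR
        refine chaseLeftCor huv hui hulen hR ?_
        rw [hul, huf]
        have := hnotAncR (m+1) (by omega) (by omega)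
        rwa [show m + 1 - 1 = m from rfl] at this
      have jcR : 0 < W.len → W.intoL 0 = false → G.Scc W.first (W.vert 1) :=
        fun _ hL => hWinv (by omega) hL
      refine ⟨u.append W, append_valid huv hWv hlink,
        append_inducing huv hWv hlink hui hWi hx jcL jcR, ?_, ?_, ?_, ?_⟩
      · rw [append_first hlink, huf]
      · rw [append_last, hWl]
      · show 0 < u.len + W.len
        omega
      · intro hm0 hL
        rw [append_intoL_lt 0 hulen] at hL
        have hscc := chaseRightCor huv hui hulen hL
          (by rw [huf, hul]; exact hnotAncL m hm0 (by omega))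
        rw [append_first hlink, append_vert_le 1 hlink (by omega)]
        exact hscc
  obtain ⟨W, hWv, hWi, hWf, hWl, hWlen, -⟩ := key n le_rfl
  rw [Nat.sub_self, hp0] at hWf
  have hip : G.InducingPath k j := by
    have := inducingWalk_toPath W.len W le_rfl hWv hWi
      (by rw [hWf, hWl]; exact hkjne)
    rwa [hWf, hWl] at this
  exact hkj ((hadj_iff k j hkjne).2 hip)


end CausalGraphs
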